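/- Let k ≥ 6 and n ≥ (k−1)² + 1 be integers, let G be a W_k-semi-saturated graph on n vertices with maximum degree at most n − 2, and let r be a natural number. If |A*_G| ≤ r, then 2·e(G) ≥ (k − 1)n − (k − 3)r. -/

import Mathlib

open SimpleGraph

/-- `G` contains a copy of `F`, i.e. a subgraph isomorphic to `F`. -/
def HasCopy {V W : Type*} (F : SimpleGraph V) (G : SimpleGraph W) : Prop :=
  ∃ f : F →g G, Function.Injective f

/-- `G` is `F`-free: `G` contains no subgraph isomorphic to `F`. -/
def IsFree {V W : Type*} (F : SimpleGraph V) (G : SimpleGraph W) : Prop :=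
  ¬ HasCopy F G

/-- `G` is `F`-semi-saturated: for every pair of non-adjacent vertices `u ≠ v`,
the graph `G + uv` contains a copy of `F` using the edge `uv`. -/
def IsSemiSat {V W : Type*} (F : SimpleGraph V) (G : SimpleGraph W) : Prop :=
  ∀ u v : W, u ≠ v → ¬ G.Adj u v →
    ∃ f : F →g (G ⊔ fromEdgeSet {s(u, v)}), Function.Injective f ∧
      ∃ a b : V, F.Adj a b ∧ f a = u ∧ f b = v

/-- `G` is `F`-saturated: `F`-free and `F`-semi-saturated. -/
def IsSat {V W : Type*} (F : SimpleGraph V) (G : SimpleGraph W) : Prop :=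
  IsFree F G ∧ IsSemiSat F G

/-- The join `G ∨ H` of two graphs. -/
def graphJoin {V W : Type*} (G : SimpleGraph V) (H : SimpleGraph W) :
    SimpleGraph (V ⊕ W) where
  Adj x y :=
    match x, y with
    | Sum.inl a, Sum.inl b => G.Adj a b
    | Sum.inr a, Sum.inr b => H.Adj a b
    | Sum.inl _, Sum.inr _ => True
    | Sum.inr _, Sum.inl _ => True
  symm := ⟨by rintro (a | a) (b | b) h <;> first | exact G.adj_symm h | exact H.adj_symm h | trivial⟩
  loopless := ⟨by rintro (a | a) h <;> first | exact G.irrefl h | exact H.irrefl h⟩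

/-- The wheel `W_k = K_1 ∨ C_k`. -/
def wheel (k : ℕ) : SimpleGraph (Unit ⊕ Fin k) :=
  graphJoin (⊥ : SimpleGraph Unit) (cycleGraph k)

/-- `sat(n, F)`: the minimum number of edges in an `F`-saturated graph on `n` vertices. -/
noncomputable def satNumber {V : Type*} (F : SimpleGraph V) (n : ℕ) : ℕ :=
  sInf { m | ∃ G : SimpleGraph (Fin n), IsSat F G ∧ G.edgeSet.ncard = m }

/-- `ssat(n, F)`: the minimum number of edges in an `F`-semi-saturated graph on `n` vertices. -/
noncomputable def ssatNumber {V : Type*} (F : SimpleGraph V) (n : ℕ) : ℕ :=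
  sInf { m | ∃ G : SimpleGraph (Fin n), IsSemiSat F G ∧ G.edgeSet.ncard = m }

/-- The degree of a vertex. -/
noncomputable def degS {n : ℕ} (G : SimpleGraph (Fin n)) (u : Fin n) : ℕ :=
  (G.neighborSet u).ncard

/-- `A_G`: the vertices of degree at least `k - 1`. -/
def setA {n : ℕ} (k : ℕ) (G : SimpleGraph (Fin n)) : Set (Fin n) :=
  {u | k - 1 ≤ degS G u}

/-- `B_G`: the vertices of degree between `3` and `k - 2`. -/
def setB {n : ℕ} (k : ℕ) (G : SimpleGraph (Fin n)) : Set (Fin n) :=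
  {u | 3 ≤ degS G u ∧ degS G u ≤ k - 2}

/-- `C_G`: the vertices of degree `2`. -/
def setC {n : ℕ} (G : SimpleGraph (Fin n)) : Set (Fin n) :=
  {u | degS G u = 2}

/-- `A*_G = B_G ∪ C_G`. -/
def setAstar {n : ℕ} (k : ℕ) (G : SimpleGraph (Fin n)) : Set (Fin n) :=
  setB k G ∪ setC G

/-!
Every vertex `u` has a non-neighbour `v ≠ u`, and a copy of `W_k` through the added edge `uv`
maps the (at least three) wheel-neighbours of the preimage of `u` injectively into
`N(u) ∪ {v}`; so all degrees are at least `2`. A vertex outside `A*_G` therefore has degree at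
least `k - 1`, and the handshake lemma gives `2e(G) ≥ 2|A*_G| + (k - 1)(n - |A*_G|)`.
-/

theorem IsSemiSat.le_ncard_neighborSet_add_one {V W : Type*} [Finite W]
    {F : SimpleGraph V} {G : SimpleGraph W} (hG : IsSemiSat F G) {d : ℕ}
    (hF : ∀ a, d ≤ (F.neighborSet a).ncard) {u v : W} (huv : u ≠ v) (hnadj : ¬ G.Adj u v) :
    d ≤ (G.neighborSet u).ncard + 1 := by
  obtain ⟨f, hf, a, -, -, hfa, -⟩ := hG u v huv hnadj
  have hmaps : ∀ w ∈ F.neighborSet a, f w ∈ insert v (G.neighborSet u) := by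
    intro w hw
    have hadj := f.map_adj hw
    rw [hfa] at hadj
    rcases hadj with h | h
    · exact Or.inr h
    · left
      rw [fromEdgeSet_adj, Set.mem_singleton_iff, Sym2.eq_iff] at h
      rcases h.1 with ⟨-, h⟩ | ⟨h, -⟩
      · exact h
      · exact absurd h huv
  calc d ≤ (F.neighborSet a).ncard := hF a
    _ ≤ (insert v (G.neighborSet u)).ncard := Set.ncard_le_ncard_of_injOn f hmaps hf.injOn
    _ ≤ (G.neighborSet u).ncard + 1 := Set.ncard_insert_le _ _

theorem SimpleGraph.exists_ne_not_adj_of_ncard_neighborSet_add_two_le {W : Type*} [Finite W]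
    (G : SimpleGraph W) (u : W) (h : (G.neighborSet u).ncard + 2 ≤ Nat.card W) :
    ∃ v, u ≠ v ∧ ¬ G.Adj u v := by
  by_contra! hall
  have hcover : Set.univ ⊆ insert u (G.neighborSet u) := by
    intro v _
    by_cases hv : u = v
    · exact Or.inl hv.symm
    · exact Or.inr (hall v hv)
  have := (Set.ncard_le_ncard hcover).trans (Set.ncard_insert_le _ _)
  rw [Set.ncard_univ] at this
  omega

theorem three_le_ncard_neighborSet_wheel {k : ℕ} (hk : 3 ≤ k) (a : Unit ⊕ Fin k) :
    3 ≤ ((wheel k).neighborSet a).ncard := by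
  obtain ⟨m, rfl⟩ : ∃ m, k = m + 3 := ⟨k - 3, by omega⟩
  obtain ⟨x, y, z, hxy, hxz, hyz, hx, hy, hz⟩ : ∃ x y z, x ≠ y ∧ x ≠ z ∧ y ≠ z ∧
      (wheel (m + 3)).Adj a x ∧ (wheel (m + 3)).Adj a y ∧ (wheel (m + 3)).Adj a z := by
    rcases a with ⟨⟩ | i
    · exact ⟨Sum.inr ⟨0, by omega⟩, Sum.inr ⟨1, by omega⟩, Sum.inr ⟨2, by omega⟩,
        by simp, by simp, by simp, trivial, trivial, trivial⟩
    · have hi : i - 1 ≠ i + 1 := by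
        -- reduces to `1 + 1 ≠ 0` in `Fin (m + 3)`
        simp only [ne_eq, sub_eq_iff_eq_add, add_assoc i, left_eq_add]
        exact ne_of_beq_false rfl
      exact ⟨Sum.inl (), Sum.inr (i - 1), Sum.inr (i + 1), by simp, by simp, by simpa using hi,
        trivial, (cycleGraph_adj (n := m + 1)).mpr (Or.inl (sub_sub_cancel _ _)),
        (cycleGraph_adj (n := m + 1)).mpr (Or.inr (add_sub_cancel_left _ _))⟩
  calc 3 = ({x, y, z} : Set _).ncard := (Set.ncard_eq_three.mpr ⟨x, y, z, hxy, hxz, hyz, rfl⟩).symm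
    _ ≤ _ := Set.ncard_le_ncard (by simp [Set.insert_subset_iff, hx, hy, hz])

theorem two_le_degS_of_isSemiSat_wheel {k n : ℕ} (hk : 3 ≤ k) (hn : 2 ≤ n)
    {G : SimpleGraph (Fin n)} (hG : IsSemiSat (wheel k) G) (hdeg : ∀ v, degS G v ≤ n - 2)
    (u : Fin n) : 2 ≤ degS G u := by
  obtain ⟨v, huv, hnadj⟩ := G.exists_ne_not_adj_of_ncard_neighborSet_add_two_le u
    (by rw [Nat.card_fin]; have := hdeg u; rw [degS] at this; omega)
  have := hG.le_ncard_neighborSet_add_one (three_le_ncard_neighborSet_wheel hk) huv hnadj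
  rw [degS]
  omega

theorem sub_one_le_degS_of_notMem_setAstar {k n : ℕ} {G : SimpleGraph (Fin n)} {u : Fin n}
    (h2 : 2 ≤ degS G u) (hu : u ∉ setAstar k G) : k - 1 ≤ degS G u := by
  simp only [setAstar, setB, setC, Set.mem_union, Set.mem_ofPred_eq, not_or, not_and] at hu
  omega

theorem sum_degS_eq_two_mul_ncard_edgeSet {n : ℕ} (G : SimpleGraph (Fin n)) :
    ∑ u, degS G u = 2 * G.edgeSet.ncard := by
  classical
  simp only [degS, ← G.coe_neighborFinset, ← G.coe_edgeFinset, Set.ncard_coe_finset,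
    card_neighborFinset_eq_degree, sum_degrees_eq_twice_card_edges]

theorem Finset.mul_card_sub_le_sum {ι : Type*} [Fintype ι] (s : Finset ι) (f : ι → ℤ)
    {a b : ℤ} (ha : ∀ i ∈ s, a ≤ f i) (hb : ∀ i ∉ s, b ≤ f i) :
    b * Fintype.card ι - (b - a) * s.card ≤ ∑ i, f i := by
  classical
  have hs : ∑ i ∈ s, a ≤ ∑ i ∈ s, f i := Finset.sum_le_sum ha
  have hsc : ∑ i ∈ sᶜ, b ≤ ∑ i ∈ sᶜ, f i :=
    Finset.sum_le_sum fun i hi => hb i (Finset.mem_compl.mp hi)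
  rw [← Finset.sum_add_sum_compl s f]
  simp only [Finset.sum_const, Finset.card_compl, nsmul_eq_mul] at hs hsc
  rw [Nat.cast_sub (Finset.card_le_univ s)] at hsc
  linarith

/-- Lemma 3.1: if `|A*_G| ≤ r`, then `2e(G) ≥ (k - 1)n - (k - 3)r`. -/
theorem small_Astar_bound (k n r : ℕ) (hk : 6 ≤ k) (hn : (k - 1) ^ 2 + 1 ≤ n)
    (G : SimpleGraph (Fin n)) (hG : IsSemiSat (wheel k) G)
    (hdeg : ∀ v : Fin n, degS G v ≤ n - 2)
    (hr : (setAstar k G).ncard ≤ r) :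
    ((k : ℤ) - 1) * n - ((k : ℤ) - 3) * r ≤ 2 * (G.edgeSet.ncard : ℤ) := by
  classical
  have hn2 : 2 ≤ n := by have := Nat.one_le_pow 2 (k - 1) (by omega); omega
  have h2 : ∀ u, 2 ≤ degS G u := two_le_degS_of_isSemiSat_wheel (by omega) hn2 hG hdeg
  have hbound := Finset.mul_card_sub_le_sum (setAstar k G).toFinset (fun u ↦ (degS G u : ℤ))
    (a := 2) (b := k - 1) (fun u _ ↦ mod_cast h2 u) fun u hu ↦ by
      have := sub_one_le_degS_of_notMem_setAstar (h2 u) (by simpa using hu)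
      omega
  rw [Fintype.card_fin, ← Set.ncard_eq_toFinset_card'] at hbound
  have hk3 : (0 : ℤ) ≤ k - 3 := by omega
  calc ((k : ℤ) - 1) * n - (k - 3) * r ≤ (k - 1) * n - (k - 3) * (setAstar k G).ncard := by
        gcongr
    _ = (k - 1) * n - ((k - 1) - 2) * (setAstar k G).ncard := by ring
    _ ≤ ∑ u, (degS G u : ℤ) := hbound
    _ = 2 * G.edgeSet.ncard := mod_cast sum_degS_eq_two_mul_ncard_edgeSet G
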